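/- Let n be a positive integer, C = S^s with gcd(s,n) = 1, and D a diagonal matrix with unit-modulus entries a_0,…,a_{n−1}. Let α = a_0 a_1 ⋯ a_{n−1} and let λ_0 be any n-th root of α. Then for each j ∈ {0,…,n−1}, the vector x_j with coordinates (x_j)_{sk mod n} = (ω^{jk}/√n) · λ_0^k / ∏_{l=0}^{k−1} a_{sl} is an eigenvector of DC with eigenvalue ω^j λ_0, where ω = e^{2πi/n}. -/

import Mathlib

open Matrix

/-- `ω n = e^{2πi/n}`. -/
noncomputable def omg (n : ℕ) : ℂ := Complex.exp (2 * Real.pi * Complex.I / n)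

/-- The cyclic shift matrix: `S_{i,j} = 1` iff `i + 1 = j` in `ZMod n`. -/
noncomputable def Smat (n : ℕ) : Matrix (ZMod n) (ZMod n) ℂ :=
  Matrix.of fun i j => if i + 1 = j then 1 else 0

/-- The diagonal matrix `R` with `R_{j,j} = ω^j`. -/
noncomputable def Rmat (n : ℕ) : Matrix (ZMod n) (ZMod n) ℂ :=
  Matrix.diagonal fun j => omg n ^ (j.val)

/-
Write `c k` for the coordinate of the eigenvector at index `s * k`. Since `S^s` moves the
coordinate at `s * (k + 1)` to `s * k`, the eigen-equation at `s * k` reads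
`a (s k) * c (k + 1) = ω^j λ₀ * c k`, which holds by the construction of `c`. The only
remaining point is the wrap-around from `k = n - 1` to `0`: `c` is `n`-periodic because
`ω^n = 1`, `λ₀^n = ∏ a`, and the product of `a` along `s * (k + l)`, `l < n`, is again `∏ a`,
multiplication by the unit `s` permuting `ZMod n`.
-/

open Finset

lemma Smat_mulVec {n : ℕ} [NeZero n] (x : ZMod n → ℂ) :
    Smat n *ᵥ x = fun i => x (i + 1) := by
  funext i
  simp [Smat, mulVec, dotProduct]

lemma Smat_pow_mulVec {n : ℕ} [NeZero n] (s : ℕ) (x : ZMod n → ℂ) :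
    Smat n ^ s *ᵥ x = fun i => x (i + s) := by
  induction s generalizing x with
  | zero => simp
  | succ t ih =>
    rw [pow_succ, ← mulVec_mulVec, Smat_mulVec, ih]
    simp only [Nat.cast_succ, add_assoc]

lemma omg_pow_self (n : ℕ) [NeZero n] : omg n ^ n = 1 :=
  (Complex.isPrimitiveRoot_exp n (NeZero.ne n)).pow_eq_one

theorem ZMod.prod_range_natCast_eq_prod {M : Type*} [CommMonoid M] (n : ℕ) [NeZero n]
    (f : ZMod n → M) : ∏ l ∈ range n, f l = ∏ x : ZMod n, f x :=
  prod_nbij' (↑) ZMod.val (by simp) (by simp [ZMod.val_lt])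
    (fun l hl => by simp [ZMod.val_cast_of_lt (mem_range.1 hl)]) (by simp) (by simp)

theorem ZMod.prod_range_mul_natCast_add_eq_prod {M : Type*} [CommMonoid M] {n s : ℕ} [NeZero n]
    (hs : s.Coprime n) (f : ZMod n → M) (k : ℕ) :
    ∏ l ∈ range n, f (s * ↑(k + l)) = ∏ x : ZMod n, f x := by
  push_cast
  rw [ZMod.prod_range_natCast_eq_prod n fun x => f (s * (k + x))]
  have hbij : Function.Bijective fun x : ZMod n => (s : ZMod n) * (k + x) :=
    (ZMod.unitOfCoprime s hs).mulLeft_bijective.comp (add_right_injective _).bijective_of_finite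
  exact Fintype.prod_bijective _ hbij _ _ fun _ => rfl

section Eigenvector

variable {n : ℕ} (s : ℕ) (a : ZMod n → ℂ) (lam0 : ℂ) (j : ZMod n)

/-- The coordinate `(x_j)_{s k}` of the eigenvector. -/
noncomputable def eigenCoeff (k : ℕ) : ℂ :=
  omg n ^ (j.val * k) / Real.sqrt n * lam0 ^ k / ∏ l ∈ range k, a (s * l)

lemma mul_eigenCoeff_succ {k : ℕ} (hk : a (s * k) ≠ 0) :
    a (s * k) * eigenCoeff s a lam0 j (k + 1) =
      (omg n ^ j.val * lam0) * eigenCoeff s a lam0 j k := by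
  simp only [eigenCoeff, prod_range_succ, mul_add, mul_one, pow_add, pow_one]
  field_simp

lemma eigenCoeff_periodic [NeZero n] (hs : s.Coprime n) (hlam : lam0 ^ n = ∏ i, a i)
    (ha : ∏ i, a i ≠ 0) : Function.Periodic (eigenCoeff s a lam0 j) n := by
  intro k
  simp only [eigenCoeff, prod_range_add, ZMod.prod_range_mul_natCast_add_eq_prod hs, mul_add,
    pow_add, pow_mul', omg_pow_self, one_pow, mul_one, hlam]
  rw [← mul_assoc, mul_div_mul_right _ _ ha]

end Eigenvector

theorem stmt7 (n : ℕ) [NeZero n] (s : ℕ) (hs : Nat.Coprime s n)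
    (a : ZMod n → ℂ) (ha : ∀ i, ‖a i‖ = 1)
    (lam0 : ℂ) (hlam : lam0 ^ n = ∏ i, a i) (j : ZMod n) :
    (Matrix.diagonal a * Smat n ^ s).mulVec
        (fun i : ZMod n =>
          let k : ℕ := (((s : ZMod n))⁻¹ * i).val
          omg n ^ (j.val * k) / Real.sqrt n * lam0 ^ k /
            ∏ l ∈ Finset.range k, a ((s : ZMod n) * l)) =
      (omg n ^ j.val * lam0) •
        (fun i : ZMod n =>
          let k : ℕ := (((s : ZMod n))⁻¹ * i).val
          omg n ^ (j.val * k) / Real.sqrt n * lam0 ^ k /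
            ∏ l ∈ Finset.range k, a ((s : ZMod n) * l)) := by
  set c := eigenCoeff s a lam0 j
  have ha0 : ∀ i, a i ≠ 0 := fun i h => by simpa [h] using ha i
  have hper : Function.Periodic c n :=
    eigenCoeff_periodic s a lam0 j hs hlam (prod_ne_zero_iff.2 fun i _ => ha0 i)
  have hsinv : (s : ZMod n) * (s : ZMod n)⁻¹ = 1 := ZMod.coe_mul_inv_eq_one s hs
  have hcoord (k : ℕ) : c ((s : ZMod n)⁻¹ * (s * k)).val = c k := by
    rw [← mul_assoc, mul_comm _ (s : ZMod n), hsinv, one_mul, ZMod.val_natCast,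
      hper.map_mod_nat]
  change (diagonal a * Smat n ^ s) *ᵥ (fun i => c ((s : ZMod n)⁻¹ * i).val) =
    _ • fun i => c ((s : ZMod n)⁻¹ * i).val
  rw [← mulVec_mulVec, Smat_pow_mulVec]
  funext i
  obtain ⟨k, rfl⟩ : ∃ k : ℕ, i = s * k :=
    ⟨((s : ZMod n)⁻¹ * i).val, by rw [ZMod.natCast_zmod_val, ← mul_assoc, hsinv, one_mul]⟩
  have hsucc : (s : ZMod n) * k + s = s * (k + 1 : ℕ) := by push_cast; ring
  rw [mulVec_diagonal, hsucc, hcoord, Pi.smul_apply, smul_eq_mul, hcoord,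
    mul_eigenCoeff_succ s a lam0 j (ha0 _)]
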